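/- Let N ≥ 1, M : ZMod N → ℝ positive, M' : ZMod N → ℝ positive, and define Q(f)(k) = M'(k) * (f(k+1)/M(k+1) - f(k)/M(k)) - M'(k-1) * (f(k)/M(k) - f(k-1)/M(k-1)). Then for every positive u : ZMod N → ℝ, the discrete entropy dissipation inequality holds: ∑_k Q(u)(k) * log(u(k)/M(k)) ≤ 0. -/
import Mathlib


/-- Discrete collision operator on a periodic grid. -/
noncomputable def Qdisc {N : ℕ} [NeZero N] (M M' : ZMod N → ℝ) (f : ZMod N → ℝ) (k : ZMod N) : ℝ :=
  M' k * (f (k + 1) / M (k + 1) - f k / M k)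
    - M' (k - 1) * (f k / M k - f (k - 1) / M (k - 1))

theorem Qdisc_entropy_dissipation {N : ℕ} [NeZero N] (hN : 1 ≤ N)
    (M M' : ZMod N → ℝ) (hM : ∀ k, 0 < M k) (hM' : ∀ k, 0 < M' k)
    (u : ZMod N → ℝ) (hu : ∀ k, 0 < u k) :
    ∑ k : ZMod N, Qdisc M M' u k * Real.log (u k / M k) ≤ 0 := by
  set g : ZMod N → ℝ := fun k => u k / M k with hg
  have key : ∑ k : ZMod N, Qdisc M M' u k * Real.log (u k / M k)
      = ∑ k : ZMod N, M' k * (g (k + 1) - g k) * (Real.log (g k) - Real.log (g (k + 1))) := by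
    have h1 : ∑ k : ZMod N, Qdisc M M' u k * Real.log (u k / M k)
        = ∑ k : ZMod N, (M' k * (g (k + 1) - g k) * Real.log (g k)
          - M' (k - 1) * (g k - g (k - 1)) * Real.log (g k)) := by
      apply Finset.sum_congr rfl
      intro k _
      simp only [Qdisc, hg]
      ring
    rw [h1, Finset.sum_sub_distrib]
    have h2 : ∑ k : ZMod N, M' (k - 1) * (g k - g (k - 1)) * Real.log (g k)
        = ∑ k : ZMod N, M' k * (g (k + 1) - g k) * Real.log (g (k + 1)) := by
      apply Fintype.sum_equiv (Equiv.subRight (1 : ZMod N))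
      intro k
      simp [Equiv.subRight, sub_add_cancel]
    rw [h2, ← Finset.sum_sub_distrib]
    apply Finset.sum_congr rfl
    intro k _
    ring
  rw [key]
  apply Finset.sum_nonpos
  intro k _
  have hgk : ∀ j, 0 < g j := fun j => div_pos (hu j) (hM j)
  rcases le_total (g (k + 1)) (g k) with h | h
  · apply mul_nonpos_of_nonpos_of_nonneg
    · exact mul_nonpos_of_nonneg_of_nonpos (hM' k).le (by linarith)
    · exact sub_nonneg.mpr (Real.log_le_log (hgk _) h)
  · apply mul_nonpos_of_nonneg_of_nonpos
    · exact mul_nonneg (hM' k).le (by linarith)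
    · exact sub_nonpos.mpr (Real.log_le_log (hgk _) h)
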